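/- Let α not be an integer multiple of π, m ∈ L^∞(R) bounded, and define m̃(x) = m(x sin α). If f ∈ L^2(R) and T f := M_{−α} F^{−1}[ m̃ · F(M_α f) ], where M_α g(x) = e^{πix² cot α} g(x) and F is the classical Fourier transform on L^2, then F_α(T f)(x) = m(x)(F_α f)(x) for almost every x; consequently, if the classical Fourier multiplier operator with symbol m̃ is bounded on L^p(R) with norm C, then ‖T f‖_p ≤ C ‖f‖_p for all f ∈ L^2 ∩ L^p. -/

import Mathlib

open MeasureTheory Complex Real Filter
open scoped ENNReal

noncomputable def Aa (α : ℝ) : ℂ := (1 - Complex.I * (Real.cot α : ℂ)) ^ ((1 : ℂ)/2)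

noncomputable def frftKernel (α : ℝ) (x t : ℝ) : ℂ :=
  Aa α * Complex.exp (2 * Real.pi * Complex.I *
    (((t : ℂ)^2/2) * (Real.cot α : ℂ) - (x : ℂ) * (t : ℂ) * ((Real.sin α : ℂ))⁻¹
      + ((x : ℂ)^2/2) * (Real.cot α : ℂ)))

noncomputable def frft (α : ℝ) (f : ℝ → ℂ) (x : ℝ) : ℂ :=
  ∫ t : ℝ, frftKernel α x t * f t

noncomputable def classicalFT (g : ℝ → ℂ) (x : ℝ) : ℂ :=
  ∫ t : ℝ, g t * Complex.exp (-2 * Real.pi * Complex.I * (x : ℂ) * (t : ℂ))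

noncomputable def chirp (α : ℝ) (g : ℝ → ℂ) (x : ℝ) : ℂ :=
  Complex.exp ((Real.pi : ℂ) * Complex.I * (x : ℂ)^2 * (Real.cot α : ℂ)) * g x

noncomputable def invFT (g : ℝ → ℂ) (x : ℝ) : ℂ :=
  ∫ ξ : ℝ, g ξ * Complex.exp (2 * Real.pi * Complex.I * (x : ℂ) * (ξ : ℂ))

/-- The fractional multiplier operator `T f = M_{-α} F⁻¹ [ m̃ ⬝ F (M_α f) ]`. -/
noncomputable def Tmul (α : ℝ) (m : ℝ → ℂ) (f : ℝ → ℂ) (x : ℝ) : ℂ :=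
  Complex.exp (-(Real.pi : ℂ) * Complex.I * (x : ℂ)^2 * (Real.cot α : ℂ)) *
    invFT (fun ξ => m (ξ * Real.sin α) * classicalFT (chirp α f) ξ) x

open scoped FourierTransform

/-! For `sin α ≠ 0` the fractional Fourier transform factors as
`F_α g (x) = A_α e^{πix² cot α} F(M_α g)(x / sin α)`, and `M_α (T f) = F⁻¹ h` with
`h ξ = m(ξ sin α) F(M_α f)(ξ)`. Fourier inversion, valid almost everywhere as soon as `h` and
`F⁻¹ h` are integrable, gives `F(M_α (T f)) = h` a.e.; evaluating at `x / sin α` turns `h` into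
`m x · F(M_α f)(x / sin α)`, i.e. `F_α (T f) = m · F_α f` a.e. The chirps have modulus one, so
`‖T f‖_p = ‖F⁻¹ h‖_p` and `‖M_α f‖_p = ‖f‖_p`, which transfers the multiplier bound. -/

section Fourier

variable {V : Type*} [NormedAddCommGroup V] [InnerProductSpace ℝ V] [FiniteDimensional ℝ V]
  [MeasurableSpace V] [BorelSpace V]
  {E : Type*} [NormedAddCommGroup E] [NormedSpace ℂ E] [CompleteSpace E]

theorem Real.integral_fourier_smul_eq {f : V → ℂ} {g : V → E} (hf : Integrable f)
    (hg : Integrable g) : ∫ ξ, 𝓕 f ξ • g ξ = ∫ x, f x • 𝓕 g x := by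
  simpa using! VectorFourier.integral_fourierIntegral_smul_eq_flip (L := innerₗ V)
    Real.continuous_fourierChar continuous_inner hf hg

theorem Real.integral_fourierInv_smul_eq {f : V → ℂ} {g : V → E} (hf : Integrable f)
    (hg : Integrable g) : ∫ ξ, 𝓕⁻ f ξ • g ξ = ∫ x, f x • 𝓕⁻ g x := by
  rw [Real.fourierInv_eq_fourier_comp_neg, Real.integral_fourier_smul_eq hf.comp_neg hg,
    ← integral_neg_eq_self]
  simp [Real.fourierInv_eq_fourier_neg]

theorem Real.fourier_fourierInv_ae_eq {h : V → E} (hh : Integrable h)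
    (hih : Integrable (𝓕⁻ h)) : 𝓕 (𝓕⁻ h) =ᵐ[volume] h := by
  have hcont : Continuous (𝓕 (𝓕⁻ h)) :=
    VectorFourier.fourierIntegral_continuous Real.continuous_fourierChar continuous_inner hih
  refine ae_eq_of_integral_contDiff_smul_eq hcont.locallyIntegrable hh.locallyIntegrable
    fun g hg hgs => ?_
  let φ : SchwartzMap V ℂ :=
    (hgs.comp_left Complex.ofReal_zero).toSchwartzMap (Complex.ofRealCLM.contDiff.comp hg)
  have hφ : ∀ x, φ x = g x := fun _ => rfl
  have hinv : 𝓕⁻ (𝓕 (φ : V → ℂ)) = φ :=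
    φ.continuous.fourierInv_fourier_eq φ.integrable (𝓕 φ).integrable
  calc ∫ x, g x • 𝓕 (𝓕⁻ h) x = ∫ x, φ x • 𝓕 (𝓕⁻ h) x := by simp [hφ]
    _ = ∫ x, 𝓕⁻ (𝓕 (φ : V → ℂ)) x • h x := by
      rw [← Real.integral_fourier_smul_eq φ.integrable hih,
        Real.integral_fourierInv_smul_eq (𝓕 φ).integrable hh]
    _ = ∫ x, g x • h x := by simp [hinv, hφ]

end Fourier

theorem classicalFT_eq_fourier (g : ℝ → ℂ) : classicalFT g = 𝓕 g := by
  ext x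
  rw [Real.fourier_real_eq_integral_exp_smul, classicalFT]
  congr 1 with t
  rw [smul_eq_mul, mul_comm]
  push_cast
  ring_nf

theorem invFT_eq_fourierInv (g : ℝ → ℂ) : invFT g = 𝓕⁻ g := by
  ext x
  rw [Real.fourierInv_eq', invFT]
  congr 1 with t
  rw [smul_eq_mul, mul_comm, RCLike.inner_apply, starRingEnd_apply, star_trivial]
  push_cast
  ring_nf

theorem norm_chirp (α : ℝ) (g : ℝ → ℂ) (x : ℝ) : ‖chirp α g x‖ = ‖g x‖ := by
  have hphase : (π : ℂ) * I * (x : ℂ) ^ 2 * (Real.cot α : ℂ) =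
      ((π * x ^ 2 * Real.cot α : ℝ) : ℂ) * I := by
    push_cast
    ring
  rw [chirp, norm_mul, hphase, norm_exp_ofReal_mul_I, one_mul]

theorem eLpNorm_chirp (α : ℝ) (g : ℝ → ℂ) (p : ℝ≥0∞) (μ : Measure ℝ) :
    eLpNorm (chirp α g) p μ = eLpNorm g p μ :=
  eLpNorm_congr_norm_ae (ae_of_all _ (norm_chirp α g))

theorem MeasureTheory.MemLp.chirp {g : ℝ → ℂ} {p : ℝ≥0∞} {μ : Measure ℝ} (hg : MemLp g p μ)
    (α : ℝ) : MemLp (chirp α g) p μ :=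
  hg.congr_norm ((by fun_prop : Continuous fun x : ℝ =>
      cexp (π * I * (x : ℂ) ^ 2 * (Real.cot α : ℂ))).aestronglyMeasurable.mul hg.1)
    (ae_of_all _ fun x => (norm_chirp α g x).symm)

theorem MeasureTheory.Integrable.chirp {g : ℝ → ℂ} {μ : Measure ℝ} (hg : Integrable g μ)
    (α : ℝ) : Integrable (chirp α g) μ :=
  memLp_one_iff_integrable.mp ((memLp_one_iff_integrable.mpr hg).chirp α)

theorem chirp_Tmul (α : ℝ) (m f : ℝ → ℂ) :
    chirp α (Tmul α m f) = invFT (fun ξ => m (ξ * Real.sin α) * classicalFT (chirp α f) ξ) := by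
  ext x
  rw [chirp, Tmul, ← mul_assoc, ← Complex.exp_add, neg_mul, neg_mul, neg_mul, add_neg_cancel,
    Complex.exp_zero, one_mul]

theorem frft_eq_classicalFT_chirp {α : ℝ} (hs : Real.sin α ≠ 0) (g : ℝ → ℂ) (x : ℝ) :
    frft α g x = Aa α * cexp (π * I * (x : ℂ) ^ 2 * (Real.cot α : ℂ)) *
      classicalFT (chirp α g) (x / Real.sin α) := by
  rw [frft, classicalFT, ← integral_const_mul]
  congr 1 with t
  have hsC : (Real.sin α : ℂ) ≠ 0 := ofReal_ne_zero.mpr hs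
  have hphase : 2 * π * I * ((t : ℂ) ^ 2 / 2 * (Real.cot α : ℂ)
      - (x : ℂ) * (t : ℂ) * ((Real.sin α : ℂ))⁻¹ + (x : ℂ) ^ 2 / 2 * (Real.cot α : ℂ)) =
      π * I * (x : ℂ) ^ 2 * (Real.cot α : ℂ) + (π * I * (t : ℂ) ^ 2 * (Real.cot α : ℂ)
        + -2 * π * I * ((x / Real.sin α : ℝ) : ℂ) * (t : ℂ)) := by
    push_cast
    field_simp
    ring
  rw [frftKernel, chirp, hphase, Complex.exp_add, Complex.exp_add]
  ring

theorem frft_multiplier_general (α : ℝ) (hα : ∀ n : ℤ, α ≠ n * Real.pi)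
    (m : ℝ → ℂ)
    (f : ℝ → ℂ) (hfInt : Integrable f)
    (hmInt : Integrable (fun ξ => m (ξ * Real.sin α) * classicalFT (chirp α f) ξ))
    (hTfInt : Integrable (Tmul α m f)) :
    (∀ᵐ x : ℝ, frft α (Tmul α m f) x = m x * frft α f x) ∧
    ∀ (p : ℝ≥0∞) (C : ℝ), 1 ≤ p →
      (∀ g : ℝ → ℂ, Integrable g → MemLp g p →
        Integrable (fun ξ => m (ξ * Real.sin α) * classicalFT g ξ) →
        eLpNorm (invFT (fun ξ => m (ξ * Real.sin α) * classicalFT g ξ)) p volume ≤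
          ENNReal.ofReal C * eLpNorm g p volume) →
      MemLp f p → eLpNorm (Tmul α m f) p volume ≤ ENNReal.ofReal C * eLpNorm f p volume := by
  have hs : Real.sin α ≠ 0 := Real.sin_ne_zero_iff.mpr fun n => (hα n).symm
  set h := fun ξ => m (ξ * Real.sin α) * classicalFT (chirp α f) ξ
  have hchirpT : chirp α (Tmul α m f) = 𝓕⁻ h := by rw [chirp_Tmul, invFT_eq_fourierInv]
  refine ⟨?_, fun p C _ hbound hfp => ?_⟩
  · have hinv : ∀ᵐ x : ℝ, 𝓕 (𝓕⁻ h) ((Real.sin α)⁻¹ • x) = h ((Real.sin α)⁻¹ • x) :=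
      (Measure.quasiMeasurePreserving_smul volume (inv_ne_zero hs)).ae
        (Real.fourier_fourierInv_ae_eq hmInt (hchirpT ▸ hTfInt.chirp α))
    filter_upwards [hinv] with x hx
    rw [smul_eq_mul, ← div_eq_inv_mul] at hx
    rw [frft_eq_classicalFT_chirp hs, frft_eq_classicalFT_chirp hs, hchirpT,
      classicalFT_eq_fourier, hx]
    simp only [h, div_mul_cancel₀ x hs]
    ring
  · calc eLpNorm (Tmul α m f) p volume = eLpNorm (invFT h) p volume := by
          rw [← eLpNorm_chirp α, chirp_Tmul]
      _ ≤ ENNReal.ofReal C * eLpNorm (chirp α f) p volume :=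
          hbound _ (hfInt.chirp α) (hfp.chirp α) hmInt
      _ = ENNReal.ofReal C * eLpNorm f p volume := by rw [eLpNorm_chirp]

theorem frft_multiplier (α : ℝ) (hα : ∀ n : ℤ, α ≠ n * Real.pi)
    (m : ℝ → ℂ) (hm : ∃ C : ℝ, ∀ x : ℝ, ‖m x‖ ≤ C)
    (f : ℝ → ℂ) (hf2 : MemLp f 2 (volume : Measure ℝ)) (hfInt : Integrable f)
    (hmInt : Integrable (fun ξ => m (ξ * Real.sin α) * classicalFT (chirp α f) ξ))
    (hTfInt : Integrable (Tmul α m f)) :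
    (∀ᵐ x : ℝ, frft α (Tmul α m f) x = m x * frft α f x) ∧
    ∀ (p : ℝ≥0∞) (C : ℝ), 1 ≤ p →
      (∀ g : ℝ → ℂ, Integrable g → MemLp g p →
        Integrable (fun ξ => m (ξ * Real.sin α) * classicalFT g ξ) →
        eLpNorm (invFT (fun ξ => m (ξ * Real.sin α) * classicalFT g ξ)) p volume ≤
          ENNReal.ofReal C * eLpNorm g p volume) →
      MemLp f p → eLpNorm (Tmul α m f) p volume ≤ ENNReal.ofReal C * eLpNorm f p volume :=
  frft_multiplier_general α hα m f hfInt hmInt hTfInt
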